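/- Fundamental theorem of logical relations for IKC: given an IKC term Δ ⊢ t : A, a substitution Γ ⊢ˢ s : Δ, and an environment δ : ⟦Δ⟧_Γ in the IKC NbE model, if LR_Δ(s, δ) holds then LR_A(subst s t, ⟦t⟧ δ) holds. -/

import Mathlib

namespace IKC

/-- Types of the Fitch-style calculus: base type ι, functions, box. -/
inductive Ty : Type
  | base : Ty
  | arr : Ty → Ty → Ty
  | box : Ty → Ty

/-- Typing contexts: empty, extension by a type, extension by a lock 🔒. -/
inductive Cx : Type
  | nil : Cx
  | snoc : Cx → Ty → Cx
  | lock : Cx → Cx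

/-- IKC modal accessibility relation Δ ◁ Γ: Γ = Δ,🔒,Δ' with Δ' lock-free. -/
inductive Ext : Cx → Cx → Type
  | nil : Ext Γ (.lock Γ)
  | var : Ext Δ Γ → Ext Δ (.snoc Γ A)

/-- Order-preserving embeddings Γ ≤ Γ'. -/
inductive Ope : Cx → Cx → Type
  | base : Ope .nil .nil
  | drop : Ope Γ Γ' → Ope Γ (.snoc Γ' A)
  | keep : Ope Γ Γ' → Ope (.snoc Γ A) (.snoc Γ' A)
  | keepLock : Ope Γ Γ' → Ope (.lock Γ) (.lock Γ')

/-- Identity OPE. -/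
def idOpe : (Γ : Cx) → Ope Γ Γ
  | .nil => .base
  | .snoc Γ _ => .keep (idOpe Γ)
  | .lock Γ => .keepLock (idOpe Γ)

/-- De Bruijn variables (no rule through locks). -/
inductive Var : Cx → Ty → Type
  | zero : Var (.snoc Γ A) A
  | succ : Var Γ A → Var (.snoc Γ B) A

/-- Intrinsically-typed terms of IKC. -/
inductive Tm : Cx → Ty → Type
  | var : Var Γ A → Tm Γ A
  | lam : Tm (.snoc Γ A) B → Tm Γ (.arr A B)
  | app : Tm Γ (.arr A B) → Tm Γ A → Tm Γ B
  | box : Tm (.lock Γ) A → Tm Γ (.box A)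
  | unbox : Tm Δ (.box A) → Ext Δ Γ → Tm Γ A

/-- Factorization of e : Δ ◁ Γ along an OPE o : Γ ≤ Γ'. -/
def factor : {Δ Γ Γ' : Cx} → Ext Δ Γ → Ope Γ Γ' → (Δ' : Cx) × Ope Δ Δ' × Ext Δ' Γ'
  | _, _, _, e, .drop o =>
    let f := factor e o
    ⟨f.1, f.2.1, .var f.2.2⟩
  | _, _, _, .nil, .keepLock o => ⟨_, o, .nil⟩
  | _, _, _, .var e, .keep o =>
    let f := factor e o
    ⟨f.1, f.2.1, .var f.2.2⟩

/-- An accessibility proof e : Δ ◁ Γ yields an OPE Δ,🔒 ≤ Γ. -/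
def factorOpe : {Δ Γ : Cx} → Ext Δ Γ → Ope (.lock Δ) Γ
  | _, _, .nil => idOpe _
  | _, _, .var e => .drop (factorOpe e)

/-- Weakening of variables along an OPE. -/
def wkVar : {Γ Γ' : Cx} → Ope Γ Γ' → Var Γ A → Var Γ' A
  | _, _, .drop o, v => .succ (wkVar o v)
  | _, _, .keep _, .zero => .zero
  | _, _, .keep o, .succ v => .succ (wkVar o v)

/-- Weakening (renaming) of terms along an OPE. -/
def wkTm : {Γ Γ' : Cx} → Ope Γ Γ' → Tm Γ A → Tm Γ' A
  | _, _, o, .var v => .var (wkVar o v)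
  | _, _, o, .lam t => .lam (wkTm (.keep o) t)
  | _, _, o, .app t u => .app (wkTm o t) (wkTm o u)
  | _, _, o, .box t => .box (wkTm (.keepLock o) t)
  | _, _, o, .unbox t e => .unbox (wkTm (factor e o).2.1 t) (factor e o).2.2

/-- Substitutions Γ ⊢ˢ s : Δ. -/
inductive Sub : Cx → Cx → Type
  | empty : Sub Γ .nil
  | snoc : Sub Γ Δ → Tm Γ A → Sub Γ (.snoc Δ A)
  | lock : Sub Θ Δ → Ext Θ Γ → Sub Γ (.lock Δ)

/-- Weakening of substitutions along an OPE. -/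
def wkSub : {Γ Γ' Δ : Cx} → Ope Γ Γ' → Sub Γ Δ → Sub Γ' Δ
  | _, _, _, _, .empty => .empty
  | _, _, _, o, .snoc s t => .snoc (wkSub o s) (wkTm o t)
  | _, _, _, o, .lock s e => .lock (wkSub (factor e o).2.1 s) (factor e o).2.2

/-- Identity substitution. -/
def idSub : (Γ : Cx) → Sub Γ Γ
  | .nil => .empty
  | .snoc Γ _ => .snoc (wkSub (.drop (idOpe Γ)) (idSub Γ)) (.var .zero)
  | .lock Γ => .lock (idSub Γ) .nil

/-- Action of a substitution on a variable. -/
def substVar : {Γ Δ : Cx} → Sub Γ Δ → Var Δ A → Tm Γ A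
  | _, _, .snoc _ t, .zero => t
  | _, _, .snoc s _, .succ v => substVar s v

/-- Trimming a substitution along the modal accessibility relation. -/
def trimSub : {Γ Δ Θ : Cx} → Sub Γ Δ → Ext Θ Δ → (Θ' : Cx) × Sub Θ' Θ × Ext Θ' Γ
  | _, _, _, .lock s e, .nil => ⟨_, s, e⟩
  | _, _, _, .snoc s _, .var e => trimSub s e

/-- Application of a substitution to a term. -/
def subst : {Γ Δ : Cx} → Sub Γ Δ → Tm Δ A → Tm Γ A
  | _, _, s, .var v => substVar s v
  | _, _, s, .lam t => .lam (subst (.snoc (wkSub (.drop (idOpe _)) s) (.var .zero)) t)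
  | _, _, s, .app t u => .app (subst s t) (subst s u)
  | _, _, s, .box t => .box (subst (.lock s .nil) t)
  | _, _, s, .unbox t e => .unbox (subst (trimSub s e).2.1 t) (trimSub s e).2.2

/-- The equational theory ≈ of IKC. -/
inductive Conv : {Γ : Cx} → {A : Ty} → Tm Γ A → Tm Γ A → Prop
  | refl (t : Tm Γ A) : Conv t t
  | symm : Conv t u → Conv u t
  | trans : Conv t u → Conv u v → Conv t v
  | congLam : Conv t t' → Conv (.lam t) (.lam t')
  | congApp : Conv t t' → Conv u u' → Conv (.app t u) (.app t' u')
  | congBox : Conv t t' → Conv (.box t) (.box t')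
  | congUnbox {t t' : Tm Δ (.box A)} {e : Ext Δ Γ} :
      Conv t t' → Conv (.unbox t e) (.unbox t' e)
  | betaFun (t : Tm (.snoc Γ A) B) (u : Tm Γ A) :
      Conv (.app (.lam t) u) (subst (.snoc (idSub Γ) u) t)
  | etaFun (t : Tm Γ (.arr A B)) :
      Conv t (.lam (.app (wkTm (.drop (idOpe Γ)) t) (.var .zero)))
  | betaBox (t : Tm (.lock Δ) A) (e : Ext Δ Γ) :
      Conv (.unbox (.box t) e) (wkTm (factorOpe e) t)
  | etaBox (t : Tm Γ (.box A)) :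
      Conv t (.box (.unbox t .nil))

end IKC

namespace IKC

mutual
/-- Normal forms of IKC. -/
inductive Nf : Cx → Ty → Type
  | up : Ne Γ .base → Nf Γ .base
  | lam : Nf (.snoc Γ A) B → Nf Γ (.arr A B)
  | box : Nf (.lock Γ) A → Nf Γ (.box A)
/-- Neutral elements of IKC. -/
inductive Ne : Cx → Ty → Type
  | var : Var Γ A → Ne Γ A
  | app : Ne Γ (.arr A B) → Nf Γ A → Ne Γ B
  | unbox : Ne Δ (.box A) → Ext Δ Γ → Ne Γ A
end

/-- Composition of OPEs. -/
def compOpe : {Γ Γ' Γ'' : Cx} → Ope Γ Γ' → Ope Γ' Γ'' → Ope Γ Γ''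
  | _, _, _, o, .drop p => .drop (compOpe o p)
  | _, _, _, .drop o, .keep p => .drop (compOpe o p)
  | _, _, _, .keep o, .keep p => .keep (compOpe o p)
  | _, _, _, .keepLock o, .keepLock p => .keepLock (compOpe o p)
  | _, _, _, .base, .base => .base

mutual
/-- Weakening of normal forms along an OPE. -/
def wkNf : {Γ Γ' : Cx} → {A : Ty} → Ope Γ Γ' → Nf Γ A → Nf Γ' A
  | _, _, _, o, .up n => .up (wkNe o n)
  | _, _, _, o, .lam n => .lam (wkNf (.keep o) n)
  | _, _, _, o, .box n => .box (wkNf (.keepLock o) n)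
/-- Weakening of neutral elements along an OPE. -/
def wkNe : {Γ Γ' : Cx} → {A : Ty} → Ope Γ Γ' → Ne Γ A → Ne Γ' A
  | _, _, _, o, .var v => .var (wkVar o v)
  | _, _, _, o, .app n m => .app (wkNe o n) (wkNf o m)
  | _, _, _, o, .unbox n e => .unbox (wkNe (factor e o).2.1 n) (factor e o).2.2
end

/-- Interpretation of types in the NbE model (worlds are contexts, ≤ is given
by OPEs, R by the modal accessibility relation ◁, and the valuation of the
base type by neutral elements). -/
def SemTy : Ty → Cx → Type
  | .base, Γ => Ne Γ .base
  | .arr A B, Γ => ∀ Γ', Ope Γ Γ' → SemTy A Γ' → SemTy B Γ'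
  | .box A, Γ => ∀ Γ', Ope Γ Γ' → ∀ Δ, Ext Γ' Δ → SemTy A Δ

/-- Interpretation of contexts in the NbE model. -/
def SemCx : Cx → Cx → Type
  | .nil, _ => PUnit
  | .snoc Γ A, Δ => SemCx Γ Δ × SemTy A Δ
  | .lock Γ, Δ => (Θ : Cx) × SemCx Γ Θ × Ext Θ Δ

/-- Monotonicity for the NbE interpretation of types. -/
def wkSemTy : (A : Ty) → {Δ Δ' : Cx} → Ope Δ Δ' → SemTy A Δ → SemTy A Δ'
  | .base, _, _, o, n => wkNe o n
  | .arr _ _, _, _, o, f => fun Γ'' o' a => f Γ'' (compOpe o o') a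
  | .box _, _, _, o, b => fun Γ'' o' Θ e => b Γ'' (compOpe o o') Θ e

/-- Monotonicity for the NbE interpretation of contexts. -/
def wkSemCx : (Γ : Cx) → {Δ Δ' : Cx} → Ope Δ Δ' → SemCx Γ Δ → SemCx Γ Δ'
  | .nil, _, _, _, _ => PUnit.unit
  | .snoc Γ A, _, _, o, γ => (wkSemCx Γ o γ.1, wkSemTy A o γ.2)
  | .lock Γ, _, _, o, γ => ⟨(factor γ.2.2 o).1, wkSemCx Γ (factor γ.2.2 o).2.1 γ.2.1, (factor γ.2.2 o).2.2⟩

/-- Looking up a variable in an NbE environment. -/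
def lookup : {Γ : Cx} → {A : Ty} → Var Γ A → ∀ {Δ}, SemCx Γ Δ → SemTy A Δ
  | _, _, .zero, _, γ => γ.2
  | _, _, .succ v, _, γ => lookup v γ.1

/-- Trimming an NbE environment along the modal accessibility relation. -/
def trimSem : {Θ Γ : Cx} → Ext Θ Γ → ∀ {Δ}, SemCx Γ Δ → SemCx (.lock Θ) Δ
  | _, _, .nil, _, γ => γ
  | _, _, .var e, _, γ => trimSem e γ.1

/-- Evaluation of IKC terms in the NbE model. -/
def eval : {Γ : Cx} → {A : Ty} → Tm Γ A → ∀ Δ, SemCx Γ Δ → SemTy A Δ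
  | _, _, .var v, _, γ => lookup v γ
  | _, _, .lam t, _, γ => fun Γ' o a => eval t Γ' (wkSemCx _ o γ, a)
  | _, _, .app t u, Δ, γ => eval t Δ γ Δ (idOpe Δ) (eval u Δ γ)
  | _, _, .box t, _, γ => fun Γ' o Θ e => eval t Θ ⟨Γ', wkSemCx _ o γ, e⟩
  | _, _, .unbox t e, Δ, γ =>
    let d := trimSem e γ
    eval t d.1 d.2.1 d.1 (idOpe d.1) Δ d.2.2

mutual
/-- Embedding of normal forms into terms. -/
def embNf : {Γ : Cx} → {A : Ty} → Nf Γ A → Tm Γ A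
  | _, _, .up n => embNe n
  | _, _, .lam n => .lam (embNf n)
  | _, _, .box n => .box (embNf n)
/-- Embedding of neutral elements into terms. -/
def embNe : {Γ : Cx} → {A : Ty} → Ne Γ A → Tm Γ A
  | _, _, .var v => .var v
  | _, _, .app n m => .app (embNe n) (embNf m)
  | _, _, .unbox n e => .unbox (embNe n) e
end

/-- The logical relation between terms and values of the NbE model,
defined by induction on the type. -/
def LR : (A : Ty) → {Γ : Cx} → Tm Γ A → SemTy A Γ → Prop
  | .base, _, t, n => Conv t (embNe n)
  | .arr A B, Γ, t, f => ∀ (Γ' : Cx) (o : Ope Γ Γ') (u : Tm Γ' A) (a : SemTy A Γ'),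
      LR A u a → LR B (.app (wkTm o t) u) (f Γ' o a)
  | .box A, Γ, t, b => ∀ (Γ' : Cx) (o : Ope Γ Γ') (Δ : Cx) (e : Ext Γ' Δ),
      LR A (.unbox (wkTm o t) e) (b Γ' o Δ e)

/-- The logical relation between substitutions and NbE environments,
defined componentwise. -/
inductive LRSub : {Γ Δ : Cx} → Sub Γ Δ → SemCx Δ Γ → Prop
  | empty {Γ : Cx} : LRSub (Γ := Γ) .empty PUnit.unit
  | snoc {Γ Δ : Cx} {A : Ty} {s : Sub Γ Δ} {δ : SemCx Δ Γ} {t : Tm Γ A} {a : SemTy A Γ} :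
      LRSub s δ → LR A t a → LRSub (.snoc s t) (δ, a)
  | lock {Γ Θ Δ : Cx} {s : Sub Θ Δ} {δ : SemCx Δ Θ} (e : Ext Θ Γ) :
      LRSub s δ → LRSub (.lock s e) ⟨Θ, δ, e⟩

/-! By induction on `t`, for all related pairs `(s, δ)` at once. Variables and applications
are immediate. For `λ` and `box` the value is an evaluation in an extended environment, while
the term is a β-redex built from a weakened instance of `subst s t`; the β-rule for `⟶`
(resp. `□`) identifies that redex, up to `≈`, with the instance of `t` at the extended
substitution, so the induction hypothesis applies because `LR` is closed under `≈` and under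
weakening. The identification is the syntactic core of the argument: weakening commutes with
substitution and substitutions compose. For `unbox`, trimming the substitution and the
environment along `e` preserves relatedness. -/

theorem factor_drop {Δ Γ Γ' : Cx} {A : Ty} (e : Ext Δ Γ) (o : Ope Γ Γ') :
    factor e (Ope.drop (A := A) o) =
      ⟨(factor e o).1, (factor e o).2.1, .var (factor e o).2.2⟩ := by
  rw [factor]

theorem factor_var_keep {Δ Γ Γ' : Cx} {A : Ty} (e : Ext Δ Γ) (o : Ope Γ Γ') :
    factor (Ext.var (A := A) e) (Ope.keep o) =
      ⟨(factor e o).1, (factor e o).2.1, .var (factor e o).2.2⟩ := by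
  rw [factor]

theorem factor_nil_keepLock {Γ Γ' : Cx} (o : Ope Γ Γ') :
    factor Ext.nil (Ope.keepLock o) = ⟨Γ', o, .nil⟩ := by
  rw [factor]

theorem compOpe_idOpe : ∀ {Γ Γ' : Cx} (o : Ope Γ Γ'), compOpe o (idOpe Γ') = o
  | _, _, .base => rfl
  | _, _, .drop o => congrArg Ope.drop (compOpe_idOpe o)
  | _, _, .keep o => congrArg Ope.keep (compOpe_idOpe o)
  | _, _, .keepLock o => congrArg Ope.keepLock (compOpe_idOpe o)

theorem idOpe_compOpe : ∀ {Γ Γ' : Cx} (o : Ope Γ Γ'), compOpe (idOpe Γ) o = o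
  | _, _, .base => rfl
  | _, _, .drop o => congrArg Ope.drop (idOpe_compOpe o)
  | _, _, .keep o => congrArg Ope.keep (idOpe_compOpe o)
  | _, _, .keepLock o => congrArg Ope.keepLock (idOpe_compOpe o)

theorem factor_idOpe : ∀ {Δ Γ : Cx} (e : Ext Δ Γ), factor e (idOpe Γ) = ⟨Δ, idOpe Δ, e⟩
  | _, _, .nil => factor_nil_keepLock _
  | _, _, .var e => by rw [idOpe, factor_var_keep, factor_idOpe e]

theorem factor_compOpe :
    ∀ {Δ Γ Γ' Γ'' : Cx} (e : Ext Δ Γ) (o : Ope Γ Γ') (o' : Ope Γ' Γ''),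
    factor e (compOpe o o') = ⟨(factor (factor e o).2.2 o').1,
      compOpe (factor e o).2.1 (factor (factor e o).2.2 o').2.1, (factor (factor e o).2.2 o').2.2⟩
  | _, _, _, _, e, o, .drop o' => by
      rw [compOpe, factor_drop, factor_compOpe e o o', factor_drop]
  | _, _, _, _, e, .drop o, .keep o' => by
      rw [compOpe, factor_drop, factor_compOpe e o o', factor_drop, factor_var_keep]
  | _, _, _, _, .var e, .keep o, .keep o' => by
      rw [compOpe, factor_var_keep, factor_compOpe e o o', factor_var_keep, factor_var_keep]
  | _, _, _, _, .nil, .keepLock o, .keepLock o' => by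
      rw [compOpe, factor_nil_keepLock, factor_nil_keepLock, factor_nil_keepLock]
  | _, _, _, _, e, .base, .base => nomatch e

theorem factorOpe_naturality : ∀ {Δ Γ Γ' : Cx} (e : Ext Δ Γ) (o : Ope Γ Γ'),
    compOpe (.keepLock (factor e o).2.1) (factorOpe (factor e o).2.2) = compOpe (factorOpe e) o
  | _, _, _, e, .drop o => by
      rw [factor_drop, factorOpe, compOpe, compOpe, factorOpe_naturality e o]
  | _, _, _, .var e, .keep o => by
      rw [factor_var_keep, factorOpe, compOpe, factorOpe, compOpe, factorOpe_naturality e o]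
  | _, _, _, .nil, .keepLock o => by
      rw [factor_nil_keepLock]; simp only [factorOpe, idOpe, compOpe, compOpe_idOpe, idOpe_compOpe]

theorem factor_nil_compOpe_factorOpe : ∀ {Δ Γ Γ' : Cx} (o : Ope Γ Γ') (e : Ext Γ' Δ),
    factor (.nil : Ext Γ (.lock Γ)) (compOpe (.keepLock o) (factorOpe e)) = ⟨Γ', o, e⟩
  | _, _, _, _, .nil => by rw [factorOpe, idOpe, compOpe, compOpe_idOpe, factor_nil_keepLock]
  | _, _, _, o, .var e => by
      rw [factorOpe, compOpe, factor_drop, factor_nil_compOpe_factorOpe o e]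

theorem wkVar_idOpe : ∀ {Γ : Cx} {A : Ty} (v : Var Γ A), wkVar (idOpe Γ) v = v
  | _, _, .zero => rfl
  | _, _, .succ v => congrArg Var.succ (wkVar_idOpe v)

theorem wkTm_idOpe : ∀ {Γ : Cx} {A : Ty} (t : Tm Γ A), wkTm (idOpe Γ) t = t
  | _, _, .var v => congrArg Tm.var (wkVar_idOpe v)
  | _, _, .lam t => congrArg Tm.lam (wkTm_idOpe t)
  | _, _, .app t u => by rw [wkTm, wkTm_idOpe t, wkTm_idOpe u]
  | _, _, .box t => congrArg Tm.box (wkTm_idOpe t)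
  | _, _, .unbox t _ => by rw [wkTm, factor_idOpe, wkTm_idOpe t]

theorem wkSub_idOpe : ∀ {Γ Δ : Cx} (s : Sub Γ Δ), wkSub (idOpe Γ) s = s
  | _, _, .empty => rfl
  | _, _, .snoc s t => by rw [wkSub, wkSub_idOpe s, wkTm_idOpe t]
  | _, _, .lock s _ => by rw [wkSub, factor_idOpe, wkSub_idOpe s]

theorem wkVar_wkVar :
    ∀ {Γ Γ' Γ'' : Cx} {A : Ty} (o : Ope Γ Γ') (o' : Ope Γ' Γ'') (v : Var Γ A),
    wkVar o' (wkVar o v) = wkVar (compOpe o o') v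
  | _, _, _, _, o, .drop o', v => congrArg Var.succ (wkVar_wkVar o o' v)
  | _, _, _, _, .drop o, .keep o', v => congrArg Var.succ (wkVar_wkVar o o' v)
  | _, _, _, _, .keep _, .keep _, .zero => rfl
  | _, _, _, _, .keep o, .keep o', .succ v => congrArg Var.succ (wkVar_wkVar o o' v)
  | _, _, _, _, .base, .base, v => nomatch v
  | _, _, _, _, .keepLock _, .keepLock _, v => nomatch v

theorem wkTm_wkTm :
    ∀ {Γ Γ' Γ'' : Cx} {A : Ty} (o : Ope Γ Γ') (o' : Ope Γ' Γ'') (t : Tm Γ A),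
    wkTm o' (wkTm o t) = wkTm (compOpe o o') t
  | _, _, _, _, o, o', .var v => congrArg Tm.var (wkVar_wkVar o o' v)
  | _, _, _, _, o, o', .lam t => congrArg Tm.lam (wkTm_wkTm (.keep o) (.keep o') t)
  | _, _, _, _, o, o', .app t u => by rw [wkTm, wkTm, wkTm_wkTm o o' t, wkTm_wkTm o o' u, wkTm]
  | _, _, _, _, o, o', .box t => congrArg Tm.box (wkTm_wkTm (.keepLock o) (.keepLock o') t)
  | _, _, _, _, o, o', .unbox t e => by
      rw [wkTm, wkTm, wkTm_wkTm, wkTm, factor_compOpe e o o']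

theorem wkSub_wkSub :
    ∀ {Γ Γ' Γ'' Δ : Cx} (o : Ope Γ Γ') (o' : Ope Γ' Γ'') (s : Sub Γ Δ),
    wkSub o' (wkSub o s) = wkSub (compOpe o o') s
  | _, _, _, _, _, _, .empty => rfl
  | _, _, _, _, o, o', .snoc s t => by
      rw [wkSub, wkSub, wkSub_wkSub o o' s, wkTm_wkTm o o' t, wkSub]
  | _, _, _, _, o, o', .lock s e => by
      rw [wkSub, wkSub, wkSub_wkSub, wkSub, factor_compOpe e o o']

def restrictSub : ∀ {Θ Δ Γ : Cx}, Ope Θ Δ → Sub Γ Δ → Sub Γ Θ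
  | _, _, _, .base, .empty => .empty
  | _, _, _, .drop o, .snoc s _ => restrictSub o s
  | _, _, _, .keep o, .snoc s t => .snoc (restrictSub o s) t
  | _, _, _, .keepLock o, .lock s e => .lock (restrictSub o s) e

def compSub : ∀ {Γ Δ Θ : Cx}, Sub Γ Δ → Sub Δ Θ → Sub Γ Θ
  | _, _, _, _, .empty => .empty
  | _, _, _, s, .snoc s' t => .snoc (compSub s s') (subst s t)
  | _, _, _, s, .lock s' e => .lock (compSub (trimSub s e).2.1 s') (trimSub s e).2.2

theorem trimSub_lock_nil {Γ Δ Θ : Cx} (s : Sub Θ Δ) (e : Ext Θ Γ) :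
    trimSub (Sub.lock s e) .nil = ⟨Θ, s, e⟩ := by
  rw [trimSub]

theorem trimSub_snoc_var {Γ Δ Θ : Cx} {A : Ty} (s : Sub Γ Δ) (t : Tm Γ A) (e : Ext Θ Δ) :
    trimSub (Sub.snoc s t) (.var e) = trimSub s e := by
  rw [trimSub]

theorem substVar_restrictSub :
    ∀ {Θ Δ Γ : Cx} {A : Ty} (o : Ope Θ Δ) (s : Sub Γ Δ) (v : Var Θ A),
    substVar (restrictSub o s) v = substVar s (wkVar o v)
  | _, _, _, _, .drop o, .snoc s _, v => substVar_restrictSub o s v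
  | _, _, _, _, .keep _, .snoc _ _, .zero => rfl
  | _, _, _, _, .keep o, .snoc s _, .succ v => substVar_restrictSub o s v

theorem trimSub_restrictSub :
    ∀ {Θ Θ' Δ Γ : Cx} (o : Ope Θ Δ) (s : Sub Γ Δ) (e : Ext Θ' Θ),
    trimSub (restrictSub o s) e = ⟨(trimSub s (factor e o).2.2).1,
      restrictSub (factor e o).2.1 (trimSub s (factor e o).2.2).2.1,
      (trimSub s (factor e o).2.2).2.2⟩
  | _, _, _, _, .drop o, .snoc s _, e => by
      rw [restrictSub, trimSub_restrictSub o s e, factor_drop, trimSub_snoc_var]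
  | _, _, _, _, .keep o, .snoc s _, .var e => by
      rw [restrictSub, trimSub_snoc_var, trimSub_restrictSub o s e, factor_var_keep,
        trimSub_snoc_var]
  | _, _, _, _, .keepLock _, .lock _ _, .nil => by
      rw [restrictSub, trimSub_lock_nil, factor_nil_keepLock, trimSub_lock_nil]

theorem restrictSub_wkSub :
    ∀ {Θ Δ Γ Γ' : Cx} (o : Ope Θ Δ) (p : Ope Γ Γ') (s : Sub Γ Δ),
    restrictSub o (wkSub p s) = wkSub p (restrictSub o s)
  | _, _, _, _, .base, _, .empty => rfl
  | _, _, _, _, .drop o, p, .snoc s _ => restrictSub_wkSub o p s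
  | _, _, _, _, .keep o, p, .snoc s _ => by
      rw [wkSub, restrictSub, restrictSub, restrictSub_wkSub o p s, wkSub]
  | _, _, _, _, .keepLock o, _, .lock s _ => by
      rw [wkSub, restrictSub, restrictSub, restrictSub_wkSub o _ s, wkSub]

theorem subst_wkTm : ∀ {Θ Δ Γ : Cx} {A : Ty} (s : Sub Γ Δ) (o : Ope Θ Δ) (t : Tm Θ A),
    subst s (wkTm o t) = subst (restrictSub o s) t
  | _, _, _, _, s, o, .var v => (substVar_restrictSub o s v).symm
  | _, _, _, _, s, o, .lam t => by
      rw [wkTm, subst, subst, subst_wkTm _ (.keep o) t, restrictSub, restrictSub_wkSub]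
  | _, _, _, _, s, o, .app t u => by rw [wkTm, subst, subst, subst_wkTm s o t, subst_wkTm s o u]
  | _, _, _, _, s, o, .box t => by
      rw [wkTm, subst, subst, subst_wkTm _ (.keepLock o) t, restrictSub]
  | _, _, _, _, s, o, .unbox t e => by
      rw [wkTm, subst, subst, subst_wkTm _ (factor e o).2.1 t, trimSub_restrictSub o s e]

theorem substVar_wkSub :
    ∀ {Γ Γ' Δ : Cx} {A : Ty} (o : Ope Γ Γ') (s : Sub Γ Δ) (v : Var Δ A),
    substVar (wkSub o s) v = wkTm o (substVar s v)
  | _, _, _, _, _, .snoc _ _, .zero => rfl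
  | _, _, _, _, o, .snoc s _, .succ v => substVar_wkSub o s v

theorem trimSub_wkSub : ∀ {Γ Γ' Δ Θ : Cx} (o : Ope Γ Γ') (s : Sub Γ Δ) (e : Ext Θ Δ),
    trimSub (wkSub o s) e = ⟨(factor (trimSub s e).2.2 o).1,
      wkSub (factor (trimSub s e).2.2 o).2.1 (trimSub s e).2.1, (factor (trimSub s e).2.2 o).2.2⟩
  | _, _, _, _, _, .lock _ _, .nil => by rw [wkSub, trimSub_lock_nil, trimSub_lock_nil]
  | _, _, _, _, o, .snoc s _, .var e => by
      rw [wkSub, trimSub_snoc_var, trimSub_wkSub o s e, trimSub_snoc_var]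

theorem wkTm_subst : ∀ {Γ Γ' Δ : Cx} {A : Ty} (o : Ope Γ Γ') (s : Sub Γ Δ) (t : Tm Δ A),
    wkTm o (subst s t) = subst (wkSub o s) t
  | _, _, _, _, o, s, .var v => (substVar_wkSub o s v).symm
  | _, _, _, _, o, s, .lam t => by
      rw [subst, wkTm, wkTm_subst (.keep o) _ t, subst, wkSub, wkSub_wkSub, wkSub_wkSub]
      simp only [wkTm, wkVar, compOpe, idOpe_compOpe, compOpe_idOpe]
  | _, _, _, _, o, s, .app t u => by rw [subst, wkTm, wkTm_subst o s t, wkTm_subst o s u, subst]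
  | _, _, _, _, o, s, .box t => by
      rw [subst, wkTm, wkTm_subst (.keepLock o) _ t, subst, wkSub, factor_nil_keepLock]
  | _, _, _, _, o, s, .unbox t e => by
      rw [subst, wkTm, wkTm_subst, subst, trimSub_wkSub o s e]

theorem substVar_idSub : ∀ {Γ : Cx} {A : Ty} (v : Var Γ A), substVar (idSub Γ) v = .var v
  | _, _, .zero => rfl
  | _, _, .succ v => by
      rw [idSub, substVar, substVar_wkSub, substVar_idSub v, wkTm, wkVar, wkVar_idOpe]

theorem trimSub_idSub : ∀ {Γ Θ : Cx} (e : Ext Θ Γ),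
    trimSub (idSub Γ) e = ⟨Θ, idSub Θ, e⟩
  | _, _, .nil => rfl
  | _, _, .var e => by
      rw [idSub, trimSub_snoc_var, trimSub_wkSub, trimSub_idSub e]
      dsimp only
      rw [factor_drop, factor_idOpe, wkSub_idOpe]

theorem subst_idSub : ∀ {Γ : Cx} {A : Ty} (t : Tm Γ A), subst (idSub Γ) t = t
  | _, _, .var v => substVar_idSub v
  | _, _, .lam t => congrArg Tm.lam (subst_idSub t)
  | _, _, .app t u => by rw [subst, subst_idSub t, subst_idSub u]
  | _, _, .box t => congrArg Tm.box (subst_idSub t)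
  | _, _, .unbox t e => by rw [subst, trimSub_idSub e, subst_idSub t]

theorem idSub_compSub : ∀ {Γ Δ : Cx} (s : Sub Γ Δ), compSub (idSub Γ) s = s
  | _, _, .empty => rfl
  | _, _, .snoc s _ => by rw [compSub, idSub_compSub s, subst_idSub]
  | _, _, .lock s _ => by rw [compSub, trimSub_idSub, idSub_compSub s]

theorem restrictSub_idOpe : ∀ {Γ Δ : Cx} (s : Sub Γ Δ), restrictSub (idOpe Δ) s = s
  | _, _, .empty => rfl
  | _, _, .snoc s _ => by rw [idOpe, restrictSub, restrictSub_idOpe s]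
  | _, _, .lock s _ => by rw [idOpe, restrictSub, restrictSub_idOpe s]

theorem restrictSub_idSub : ∀ {Γ Γ' : Cx} (o : Ope Γ Γ'),
    restrictSub o (idSub Γ') = wkSub o (idSub Γ)
  | _, _, .base => rfl
  | _, _, .drop o => by
      rw [idSub, restrictSub, restrictSub_wkSub, restrictSub_idSub o, wkSub_wkSub]
      simp only [compOpe, compOpe_idOpe]
  | _, _, .keep o => by
      rw [idSub, restrictSub, restrictSub_wkSub, restrictSub_idSub o, idSub, wkSub, wkSub_wkSub,
        wkSub_wkSub]
      simp only [wkTm, wkVar, compOpe, idOpe_compOpe, compOpe_idOpe]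
  | _, _, .keepLock o => by
      rw [idSub, restrictSub, restrictSub_idSub o, idSub, wkSub, factor_nil_keepLock]

theorem substVar_compSub :
    ∀ {Γ Δ Θ : Cx} {A : Ty} (s : Sub Γ Δ) (s' : Sub Δ Θ) (v : Var Θ A),
    substVar (compSub s s') v = subst s (substVar s' v)
  | _, _, _, _, _, .snoc _ _, .zero => rfl
  | _, _, _, _, s, .snoc s' _, .succ v => substVar_compSub s s' v

theorem trimSub_compSub : ∀ {Γ Δ Θ Θ' : Cx} (s : Sub Γ Δ) (s' : Sub Δ Θ) (e : Ext Θ' Θ),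
    trimSub (compSub s s') e = ⟨(trimSub s (trimSub s' e).2.2).1,
      compSub (trimSub s (trimSub s' e).2.2).2.1 (trimSub s' e).2.1,
      (trimSub s (trimSub s' e).2.2).2.2⟩
  | _, _, _, _, _, .lock _ _, .nil => by rw [compSub, trimSub_lock_nil, trimSub_lock_nil]
  | _, _, _, _, s, .snoc s' _, .var e => by
      rw [compSub, trimSub_snoc_var, trimSub_compSub s s' e, trimSub_snoc_var]

theorem compSub_wkSub : ∀ {Γ Δ Δ' Θ : Cx} (s : Sub Γ Δ') (o : Ope Δ Δ') (s' : Sub Δ Θ),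
    compSub s (wkSub o s') = compSub (restrictSub o s) s'
  | _, _, _, _, _, _, .empty => rfl
  | _, _, _, _, s, o, .snoc s' _ => by
      rw [wkSub, compSub, compSub_wkSub s o s', subst_wkTm, compSub]
  | _, _, _, _, s, o, .lock s' e => by
      rw [wkSub, compSub, compSub, trimSub_restrictSub o s e]
      exact congrArg (Sub.lock · _) (compSub_wkSub _ (factor e o).2.1 s')

theorem wkSub_compSub : ∀ {Γ Γ' Δ Θ : Cx} (o : Ope Γ Γ') (s : Sub Γ Δ) (s' : Sub Δ Θ),
    compSub (wkSub o s) s' = wkSub o (compSub s s')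
  | _, _, _, _, _, _, .empty => rfl
  | _, _, _, _, o, s, .snoc s' _ => by
      rw [compSub, wkSub_compSub o s s', compSub, wkSub, wkTm_subst]
  | _, _, _, _, o, s, .lock s' e => by
      rw [compSub, trimSub_wkSub o s e, compSub, wkSub]
      exact congrArg (Sub.lock · _)
        (wkSub_compSub (factor (trimSub s e).2.2 o).2.1 (trimSub s e).2.1 s')

theorem subst_subst : ∀ {Γ Δ Θ : Cx} {A : Ty} (s : Sub Γ Δ) (s' : Sub Δ Θ) (t : Tm Θ A),
    subst s (subst s' t) = subst (compSub s s') t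
  | _, _, _, _, s, s', .var v => (substVar_compSub s s' v).symm
  | _, _, _, _, s, s', .lam t => by
      rw [subst, subst, subst_subst _ _ t, subst]
      simp only [compSub, subst, substVar]
      rw [compSub_wkSub, restrictSub, restrictSub_idOpe, wkSub_compSub]
  | _, _, _, _, s, s', .app t u => by
      rw [subst, subst, subst_subst s s' t, subst_subst s s' u, subst]
  | _, _, _, _, s, s', .box t => by
      rw [subst, subst, subst_subst _ _ t, subst, compSub, trimSub_lock_nil]
  | _, _, _, _, s, s', .unbox t e => by rw [subst, subst, subst_subst _ _ t, subst, trimSub_compSub]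

theorem subst_snoc_idSub_subst_lift {Γ Δ : Cx} {A B : Ty} (s : Sub Γ Δ) (u : Tm Γ A)
    (t : Tm (.snoc Δ A) B) :
    subst (.snoc (idSub Γ) u) (subst (.snoc (wkSub (.drop (idOpe Γ)) s) (.var .zero)) t) =
      subst (.snoc s u) t := by
  rw [subst_subst, compSub, compSub_wkSub, restrictSub, restrictSub_idOpe, idSub_compSub]
  rfl

theorem wkTm_subst_snoc_idSub {Γ Γ' : Cx} {A B : Ty} (o : Ope Γ Γ') (u : Tm Γ A)
    (t : Tm (.snoc Γ A) B) :
    wkTm o (subst (.snoc (idSub Γ) u) t) =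
      subst (.snoc (idSub Γ') (wkTm o u)) (wkTm (.keep o) t) := by
  rw [subst_wkTm, restrictSub, restrictSub_idSub, wkTm_subst, wkSub]

mutual
theorem wkTm_embNf : ∀ {Γ Γ' : Cx} {A : Ty} (o : Ope Γ Γ') (n : Nf Γ A),
    wkTm o (embNf n) = embNf (wkNf o n)
  | _, _, _, o, .up n => wkTm_embNe o n
  | _, _, _, o, .lam n => congrArg Tm.lam (wkTm_embNf (.keep o) n)
  | _, _, _, o, .box n => congrArg Tm.box (wkTm_embNf (.keepLock o) n)
theorem wkTm_embNe : ∀ {Γ Γ' : Cx} {A : Ty} (o : Ope Γ Γ') (n : Ne Γ A),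
    wkTm o (embNe n) = embNe (wkNe o n)
  | _, _, _, _, .var _ => rfl
  | _, _, _, o, .app n m => by
      simp only [embNe, wkNe, wkTm]; rw [wkTm_embNe o n, wkTm_embNf o m]
  | _, _, _, o, .unbox n e => by
      simp only [embNe, wkNe, wkTm]; rw [wkTm_embNe (factor e o).2.1 n]
end

theorem Conv.wk {Γ : Cx} {A : Ty} {t u : Tm Γ A} (h : Conv t u) :
    ∀ {Γ' : Cx} (o : Ope Γ Γ'), Conv (wkTm o t) (wkTm o u) := by
  induction h with
  | refl => exact fun _ => .refl _
  | symm _ ih => exact fun o => .symm (ih o)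
  | trans _ _ ih ih' => exact fun o => .trans (ih o) (ih' o)
  | congLam _ ih => exact fun o => .congLam (ih (.keep o))
  | congApp _ _ ih ih' => exact fun o => .congApp (ih o) (ih' o)
  | congBox _ ih => exact fun o => .congBox (ih (.keepLock o))
  | congUnbox _ ih => exact fun o => .congUnbox (ih _)
  | betaFun =>
      intro _ o
      rw [wkTm_subst_snoc_idSub]
      exact .betaFun _ _
  | etaFun t =>
      intro _ o
      have h := Conv.etaFun (wkTm o t)
      simp only [wkTm, wkVar, wkTm_wkTm, compOpe, compOpe_idOpe, idOpe_compOpe] at h ⊢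
      exact h
  | betaBox _ e =>
      intro _ o
      simp only [wkTm]
      rw [wkTm_wkTm, ← factorOpe_naturality e o, ← wkTm_wkTm]
      exact .betaBox _ _
  | etaBox =>
      intro _ o
      simp only [wkTm]
      rw [factor_nil_keepLock]
      exact .etaBox _

theorem LR.of_conv : ∀ {A : Ty} {Γ : Cx} {t t' : Tm Γ A} {a : SemTy A Γ},
    Conv t t' → LR A t a → LR A t' a
  | .base, _, _, _, _, h, ht => .trans (.symm h) ht
  | .arr _ _, _, _, _, _, h, ht => fun _ o u _ hu =>
      (ht _ o u _ hu).of_conv (.congApp (h.wk o) (.refl u))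
  | .box _, _, _, _, _, h, ht => fun _ o _ e =>
      (ht _ o _ e).of_conv (.congUnbox (h.wk o))

theorem LR.wk : ∀ {A : Ty} {Γ Γ' : Cx} (o : Ope Γ Γ') {t : Tm Γ A} {a : SemTy A Γ},
    LR A t a → LR A (wkTm o t) (wkSemTy A o a)
  | .base, _, _, o, t, n, ht => by
      show Conv (wkTm o t) (embNe (wkNe o n))
      exact wkTm_embNe o n ▸ Conv.wk ht o
  | .arr _ _, _, _, o, _, _, ht => fun _ o' u _ hu => by
      rw [wkTm_wkTm]
      exact ht _ (compOpe o o') u _ hu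
  | .box _, _, _, o, _, _, ht => fun _ o' _ e => by
      rw [wkTm_wkTm]
      exact ht _ (compOpe o o') _ e

theorem LRSub.wk {Γ Δ : Cx} {s : Sub Γ Δ} {δ : SemCx Δ Γ} (h : LRSub s δ) :
    ∀ {Γ' : Cx} (o : Ope Γ Γ'), LRSub (wkSub o s) (wkSemCx Δ o δ) := by
  induction h with
  | empty => exact fun _ => .empty
  | snoc _ ht ih => exact fun o => .snoc (ih o) (ht.wk o)
  | lock e _ ih => exact fun o => .lock _ (ih (factor e o).2.1)

theorem LRSub.lookup :
    ∀ {Δ : Cx} {A : Ty} (v : Var Δ A) {Γ : Cx} {s : Sub Γ Δ} {δ : SemCx Δ Γ},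
    LRSub s δ → LR A (substVar s v) (IKC.lookup v δ)
  | _, _, .zero, _, _, _, .snoc _ ht => ht
  | _, _, .succ v, _, _, _, .snoc hs _ => hs.lookup v

theorem LRSub.trim : ∀ {Θ Δ : Cx} (e : Ext Θ Δ) {Γ : Cx} {s : Sub Γ Δ} {δ : SemCx Δ Γ},
    LRSub s δ → LRSub (.lock (trimSub s e).2.1 (trimSub s e).2.2) (trimSem e δ)
  | _, _, .nil, _, _, _, .lock _ hs => .lock _ hs
  | _, _, .var e, _, _, _, .snoc hs _ => hs.trim e

def Valid {Δ : Cx} {A : Ty} (t : Tm Δ A) : Prop :=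
  ∀ {Γ : Cx} (s : Sub Γ Δ) (δ : SemCx Δ Γ), LRSub s δ → LR A (subst s t) (eval t Γ δ)

namespace Valid

theorem var {Δ : Cx} {A : Ty} (v : Var Δ A) : Valid (.var v) :=
  fun _ _ h => h.lookup v

theorem lam {Δ : Cx} {A B : Ty} {t : Tm (.snoc Δ A) B} (ht : Valid t) : Valid (.lam t) :=
  fun s _ h Γ' o u _ hu => by
    have hβ :=
      Conv.betaFun (subst (.snoc (wkSub (.drop (idOpe Γ')) (wkSub o s)) (.var .zero)) t) u
    rw [subst_snoc_idSub_subst_lift] at hβ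
    refine (ht _ _ (.snoc (h.wk o) hu)).of_conv (.symm ?_)
    simp only [subst, wkTm, wkTm_subst, wkSub, wkSub_wkSub, wkVar, compOpe, idOpe_compOpe,
      compOpe_idOpe] at hβ ⊢
    exact hβ

theorem app {Δ : Cx} {A B : Ty} {t : Tm Δ (.arr A B)} {u : Tm Δ A} (ht : Valid t)
    (hu : Valid u) : Valid (.app t u) :=
  fun s δ h => by
    simpa only [subst, eval, wkTm_idOpe] using ht s δ h _ (idOpe _) _ _ (hu s δ h)

theorem box {Δ : Cx} {A : Ty} {t : Tm (.lock Δ) A} (ht : Valid t) : Valid (.box t) :=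
  fun s _ h Γ' o _ e => by
    refine (ht _ _ (.lock e (h.wk o))).of_conv (.symm (.trans (.betaBox _ e) ?_))
    rw [wkTm_wkTm, wkTm_subst, wkSub, factor_nil_compOpe_factorOpe]
    exact .refl _

theorem unbox_of_lock {Θ Θ' Γ : Cx} {A : Ty} {t : Tm Θ (.box A)} (ht : Valid t) {s : Sub Θ' Θ}
    {e : Ext Θ' Γ} {δ : SemCx (.lock Θ) Γ} (h : LRSub (.lock s e) δ) :
    LR A (.unbox (subst s t) e) (eval t δ.1 δ.2.1 δ.1 (idOpe _) Γ δ.2.2) := by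
  cases h with
  | lock _ hs => simpa only [wkTm_idOpe] using ht _ _ hs _ (idOpe _) _ e

theorem unbox {Θ Δ : Cx} {A : Ty} {t : Tm Θ (.box A)} (ht : Valid t) (e : Ext Θ Δ) :
    Valid (.unbox t e) :=
  fun _ _ h => ht.unbox_of_lock (h.trim e)

end Valid

theorem valid : ∀ {Δ : Cx} {A : Ty} (t : Tm Δ A), Valid t
  | _, _, .var v => Valid.var v
  | _, _, .lam t => Valid.lam (valid t)
  | _, _, .app t u => Valid.app (valid t) (valid u)
  | _, _, .box t => Valid.box (valid t)
  | _, _, .unbox t e => Valid.unbox (valid t) e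

/-- Fundamental theorem of the logical relations for IKC: if a substitution s
and an environment δ are related, then the substituted term subst s t and the
value ⟦t⟧ δ are related. -/
theorem fundamental {Δ Γ : Cx} {A : Ty} (t : Tm Δ A) (s : Sub Γ Δ) (δ : SemCx Δ Γ)
    (h : LRSub s δ) : LR A (subst s t) (eval t Γ δ) :=
  valid t s δ h

end IKC
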